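/- arXiv:1702.01543 — 3 statements merged into one kernel-verified Lean document; each statement's English description precedes it below -/
import Mathlib

section
/- Let d and t be positive integers and let h_1, …, h_t ∈ ℝ^d be such that the additive subgroup h_1ℤ + h_2ℤ + ⋯ + h_tℤ is dense in ℝ^d. Let f : ℝ^d → ℂ be continuous and suppose there exist natural numbers m_1, …, m_t such that for every k = 1, …, t the function Δ_{h_k}^{m_k} f belongs to some finite-dimensional translation-invariant linear subspace of C(ℝ^d, ℂ). Then f belongs to a finite-dimensional translation-invariant linear subspace of C(ℝ^d, ℂ). -/
/-- Forward difference operator: `(fd h f) x = f (x + h) - f x`. -/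
def fd {α : Type*} [Add α] (h : α) (f : α → ℂ) : α → ℂ := fun x => f (x + h) - f x

/-!
Put `H := ⨆ k, H_k` and `T_k := τ_{h_k} - 1`. The `T_k` commute, preserve `H`, and
`T_k ^ m_k f ∈ H`. Start from `span {f}` and, for each `k` in turn, replace the current space `U`
by `H ⊔ U ⊔ T_k U ⊔ ⋯ ⊔ T_k ^ m_k U`. This stays finite-dimensional, becomes `T_k`-invariant, and
stays invariant under the earlier `T_j`, since they commute with `T_k`. The result is a
finite-dimensional `U ∋ f` that is invariant under every `τ_{h_k}`. A translation is injective,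
so it maps the finite-dimensional `U` into itself only by mapping it onto itself. Hence `U` is
invariant under the group generated by the `h_k`. Since `U` is closed and `y ↦ τ_y f` is
continuous, density gives `τ_y f ∈ U` for every `y`, and the span of all translates of `f` is the
required space.
-/

open Module (End)
open Module.End (mem_invtSubmodule_iff_map_le)

namespace Submodule

variable {R V : Type*} [Ring R] [AddCommGroup V] [Module R V]

def powMapSup (T : End R V) (n : ℕ) (H U : Submodule R V) : Submodule R V :=
  H ⊔ ⨆ j : Fin (n + 1), U.map (T ^ (j : ℕ))

variable {T S : End R V} {n : ℕ} {H U : Submodule R V}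

instance [Module.Finite R H] [Module.Finite R U] : Module.Finite R (powMapSup T n H U) := by
  unfold powMapSup; infer_instance

lemma le_powMapSup : U ≤ powMapSup T n H U :=
  le_sup_of_le_right <| le_iSup_of_le 0 <| by
    rw [Fin.val_zero, pow_zero, Module.End.one_eq_id, map_id]

lemma powMapSup_le_comap_of_commute {H' U' : Submodule R V} (hST : Commute S T)
    (hH : H ≤ H'.comap S) (hU : U ≤ U'.comap S) :
    powMapSup T n H U ≤ (powMapSup T n H' U').comap S := by
  rw [← map_le_iff_le_comap, powMapSup, map_sup, map_iSup]
  refine sup_le_sup (map_le_iff_le_comap.2 hH) (iSup_mono fun j => ?_)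
  rw [← map_comp, ← Module.End.mul_eq_comp, (hST.pow_right j).eq, Module.End.mul_eq_comp,
    map_comp]
  exact map_mono (map_le_iff_le_comap.2 hU)

lemma powMapSup_le_of_mem_invtSubmodule (hH : H ∈ T.invtSubmodule) (hU : U ≤ H) :
    powMapSup T n H U ≤ H :=
  sup_le le_rfl <| iSup_le fun j => map_le_iff_le_comap.2 <|
    hU.trans (H.le_comap_pow_of_le_comap hH j)

lemma powMapSup_mem_invtSubmodule (hH : H ∈ T.invtSubmodule) (hU : U ≤ H.comap (T ^ n)) :
    powMapSup T n H U ∈ T.invtSubmodule := by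
  rw [mem_invtSubmodule_iff_map_le, powMapSup, map_sup, map_iSup]
  refine sup_le (le_sup_of_le_left ((mem_invtSubmodule_iff_map_le T).1 hH))
    (iSup_le fun j => ?_)
  rw [← map_comp, ← Module.End.mul_eq_comp, ← pow_succ']
  rcases j with ⟨j, hj⟩
  rcases (Nat.lt_succ_iff.1 hj).lt_or_eq with hjn | rfl
  · exact le_sup_of_le_right <| le_iSup_of_le ⟨j + 1, by omega⟩ le_rfl
  · rw [pow_succ', Module.End.mul_eq_comp, map_comp]
    exact le_sup_of_le_left <|
      (map_mono (map_le_iff_le_comap.2 hU)).trans ((mem_invtSubmodule_iff_map_le T).1 hH)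

end Submodule

namespace Module.End

variable {R V : Type*}

lemma iSup_mem_invtSubmodule [Semiring R] [AddCommMonoid V] [Module R V] {ι : Sort*}
    {f : End R V} {p : ι → Submodule R V} (hp : ∀ i, p i ∈ f.invtSubmodule) :
    (⨆ i, p i) ∈ f.invtSubmodule := by
  rw [mem_invtSubmodule_iff_map_le, Submodule.map_iSup]
  exact iSup_mono fun i => (mem_invtSubmodule_iff_map_le f).1 (hp i)

variable [Ring R] [AddCommGroup V] [Module R V]

lemma mem_invtSubmodule_sub_one_iff {f : End R V} {p : Submodule R V} :
    p ∈ (f - 1).invtSubmodule ↔ p ∈ f.invtSubmodule :=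
  forall₂_congr fun _ hx => p.sub_mem_iff_left hx

open Submodule in
theorem exists_finite_mem_invtSubmodule_of_pow_apply_mem {ι : Type*} [Finite ι]
    {T : ι → End R V} (hT : ∀ i j, Commute (T i) (T j)) {H : Submodule R V} [Module.Finite R H]
    (hH : ∀ i, H ∈ (T i).invtSubmodule) (m : ι → ℕ) {v : V} (hv : ∀ i, (T i ^ m i) v ∈ H) :
    ∃ U : Submodule R V, Module.Finite R U ∧ v ∈ U ∧ ∀ i, U ∈ (T i).invtSubmodule := by
  classical
  have hHpow : ∀ i, H ≤ H.comap (T i ^ m i) := fun i => H.le_comap_pow_of_le_comap (hH i) _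
  suffices ∀ s : Finset ι, ∃ U : Submodule R V, Module.Finite R U ∧ v ∈ U ∧
      (∀ i, U ≤ H.comap (T i ^ m i)) ∧ ∀ i ∈ s, U ∈ (T i).invtSubmodule by
    cases nonempty_fintype ι
    obtain ⟨U, hU_fin, hvU, -, hU_inv⟩ := this Finset.univ
    exact ⟨U, hU_fin, hvU, fun i => hU_inv i (Finset.mem_univ i)⟩
  intro s
  induction s using Finset.induction_on with
  | empty =>
    exact ⟨R ∙ v, inferInstance, mem_span_singleton_self v,
      fun i => (span_singleton_le_iff_mem _ _).2 (hv i), by simp⟩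
  | insert i s _ ih =>
    obtain ⟨U, hU_fin, hvU, hUH, hU_inv⟩ := ih
    refine ⟨powMapSup (T i) (m i) H U, inferInstance, le_powMapSup hvU, fun j => ?_, ?_⟩
    · exact (powMapSup_le_comap_of_commute ((hT j i).pow_left _) (hHpow j) (hUH j)).trans
        (comap_mono (powMapSup_le_of_mem_invtSubmodule (hH i) le_rfl))
    · rintro j hj
      rcases Finset.mem_insert.1 hj with rfl | hjs
      · exact powMapSup_mem_invtSubmodule (hH j) (hUH j)
      · exact powMapSup_le_comap_of_commute (hT j i) (hH j) (hU_inv j hjs)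

end Module.End

section Shift

variable {α R E : Type*} [AddCommGroup α]

section Semiring

variable [Semiring R] [AddCommMonoid E] [Module R E]

variable (R) in
def shift (y : α) : End R (α → E) := LinearMap.funLeft R E (· + y)

@[simp]
lemma shift_apply (y : α) (g : α → E) (x : α) : shift R y g x = g (x + y) := rfl

lemma shift_zero : shift R (0 : α) = (1 : End R (α → E)) := by
  ext g x; simp

lemma shift_add (y z : α) : shift R (y + z) = (shift R y * shift R z : End R (α → E)) := by
  ext g x; simp [add_assoc]

lemma commute_shift (y z : α) : Commute (shift R y : End R (α → E)) (shift R z) := by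
  rw [Commute, SemiconjBy, ← shift_add, ← shift_add, add_comm]

lemma shift_injective (y : α) : Function.Injective (shift R y : End R (α → E)) :=
  LinearMap.funLeft_injective_of_surjective _ _ _ (add_right_surjective y)

variable (R) in
def shiftStabilizer (U : Submodule R (α → E)) : AddSubgroup α where
  carrier := {y | U.map (shift R y) = U}
  zero_mem' := by simp [shift_zero, Module.End.one_eq_id]
  add_mem' {y z} (hy : U.map _ = U) (hz : U.map _ = U) := by
    change U.map _ = U
    rw [shift_add, Module.End.mul_eq_comp, Submodule.map_comp, hz, hy]
  neg_mem' {y} (hy : U.map _ = U) := by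
    change U.map _ = U
    conv_lhs => rw [← hy, ← Submodule.map_comp, ← Module.End.mul_eq_comp, ← shift_add,
      neg_add_cancel, shift_zero, Module.End.one_eq_id, Submodule.map_id]

variable (R) in
def shiftSpan (f : α → E) : Submodule R (α → E) :=
  Submodule.span R (Set.range fun y => shift R y f)

lemma mem_shiftSpan_self (f : α → E) : f ∈ shiftSpan R f :=
  Submodule.subset_span ⟨0, by simp [shift_zero]⟩

lemma shiftSpan_le_iff {f : α → E} {U : Submodule R (α → E)} :
    shiftSpan R f ≤ U ↔ ∀ y, shift R y f ∈ U :=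
  Submodule.span_le.trans Set.range_subset_iff

lemma shiftSpan_mem_invtSubmodule (f : α → E) (y : α) :
    shiftSpan R f ∈ (shift R y).invtSubmodule := by
  rw [mem_invtSubmodule_iff_map_le, shiftSpan, Submodule.map_span, Submodule.span_le]
  rintro _ ⟨_, ⟨z, rfl⟩, rfl⟩
  exact Submodule.subset_span ⟨y + z, by simp only [shift_add, Module.End.mul_apply]⟩

lemma continuous_of_mem_shiftSpan [TopologicalSpace α] [ContinuousAdd α] [TopologicalSpace R]
    [TopologicalSpace E] [ContinuousAdd E] [ContinuousSMul R E] {f : α → E} (hf : Continuous f)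
    {g : α → E} (hg : g ∈ shiftSpan R f) : Continuous g := by
  induction hg using Submodule.span_induction with
  | mem _ hg =>
    obtain ⟨y, rfl⟩ := hg
    exact hf.comp (continuous_add_const y)
  | zero => exact continuous_const
  | add _ _ _ _ hg hg' => exact hg.add hg'
  | smul c _ _ hg => exact hg.const_smul c

end Semiring

lemma commute_shift_sub_one [Ring R] [AddCommGroup E] [Module R E] (y z : α) :
    Commute (shift R y - 1 : End R (α → E)) (shift R z - 1) :=
  ((commute_shift y z).sub_left (Commute.one_left _)).sub_right
    ((Commute.one_right _).sub_left (Commute.one_left _))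

lemma fd_iterate (y : α) (n : ℕ) (g : α → ℂ) :
    (fd y)^[n] g = ((shift ℂ y - 1 : End ℂ (α → ℂ)) ^ n) g := by
  induction n with
  | zero => rfl
  | succ n ih => rw [Function.iterate_succ_apply', ih, pow_succ', Module.End.mul_apply]; rfl

lemma mem_shiftStabilizer_of_mem_invtSubmodule {K : Type*} [DivisionRing K] [AddCommGroup E]
    [Module K E] {U : Submodule K (α → E)} [FiniteDimensional K U] {y : α}
    (hU : U ∈ (shift K y).invtSubmodule) : y ∈ shiftStabilizer K U :=
  Submodule.eq_of_le_of_finrank_eq ((mem_invtSubmodule_iff_map_le _).1 hU)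
    (LinearEquiv.finrank_eq (Submodule.equivMapOfInjective _ (shift_injective y) U)).symm

lemma shift_mem_of_dense {𝕜 : Type*} [NontriviallyNormedField 𝕜] [CompleteSpace 𝕜]
    [TopologicalSpace α] [ContinuousAdd α] {U : Submodule 𝕜 (α → 𝕜)} [FiniteDimensional 𝕜 U]
    {f : α → 𝕜} (hf : Continuous f) {S : Set α} (hS : Dense S) (hSU : ∀ y ∈ S, shift 𝕜 y f ∈ U)
    (y : α) : shift 𝕜 y f ∈ U := by
  have hcont : Continuous fun y => shift 𝕜 y f :=
    continuous_pi fun x => hf.comp (continuous_const.add continuous_id)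
  exact closure_minimal hSU (U.closed_of_finiteDimensional.preimage hcont) (hS y)

end Shift

theorem stmt5_general (d t : ℕ) (h : Fin t → Fin d → ℝ)
    (hdense : Dense ((AddSubgroup.closure (Set.range h) :
      AddSubgroup (Fin d → ℝ)) : Set (Fin d → ℝ)))
    (f : (Fin d → ℝ) → ℂ) (hf : Continuous f)
    (m : Fin t → ℕ)
    (hmem : ∀ k, ∃ Hk : Submodule ℂ ((Fin d → ℝ) → ℂ),
      FiniteDimensional ℂ Hk ∧ (∀ g ∈ Hk, Continuous g) ∧
      (∀ y : Fin d → ℝ, ∀ g ∈ Hk, (fun x => g (x + y)) ∈ Hk) ∧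
      (fd (h k))^[m k] f ∈ Hk) :
    ∃ Z : Submodule ℂ ((Fin d → ℝ) → ℂ),
      FiniteDimensional ℂ Z ∧ (∀ g ∈ Z, Continuous g) ∧
      (∀ y : Fin d → ℝ, ∀ g ∈ Z, (fun x => g (x + y)) ∈ Z) ∧
      f ∈ Z := by
  choose Hk hHk_fin _ hHk_inv hfHk using hmem
  have hH (y) : (⨆ k, Hk k) ∈ (shift ℂ y).invtSubmodule :=
    Module.End.iSup_mem_invtSubmodule fun k => hHk_inv k y
  obtain ⟨U, hU_fin, hfU, hU_inv⟩ :=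
    Module.End.exists_finite_mem_invtSubmodule_of_pow_apply_mem
      (fun _ _ => commute_shift_sub_one _ _)
      (fun k => Module.End.mem_invtSubmodule_sub_one_iff.2 (hH (h k))) m
      (fun k => fd_iterate (h k) (m k) f ▸ le_iSup Hk k (hfHk k))
  have hstab : AddSubgroup.closure (Set.range h) ≤ shiftStabilizer ℂ U :=
    (AddSubgroup.closure_le _).2 <| Set.range_subset_iff.2 fun k =>
      mem_shiftStabilizer_of_mem_invtSubmodule
        (Module.End.mem_invtSubmodule_sub_one_iff.1 (hU_inv k))
  have hshift : ∀ y, shift ℂ y f ∈ U := shift_mem_of_dense hf hdense fun y hy =>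
    (hstab hy : U.map _ = U) ▸ Submodule.mem_map_of_mem hfU
  exact ⟨shiftSpan ℂ f, Submodule.finiteDimensional_of_le (shiftSpan_le_iff.2 hshift),
    fun _ => continuous_of_mem_shiftSpan hf, shiftSpan_mem_invtSubmodule f,
    mem_shiftSpan_self f⟩

theorem stmt5 (d t : ℕ) (hd : 0 < d) (ht : 0 < t) (h : Fin t → Fin d → ℝ)
    (hdense : Dense ((AddSubgroup.closure (Set.range h) :
      AddSubgroup (Fin d → ℝ)) : Set (Fin d → ℝ)))
    (f : (Fin d → ℝ) → ℂ) (hf : Continuous f)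
    (m : Fin t → ℕ)
    (hmem : ∀ k, ∃ Hk : Submodule ℂ ((Fin d → ℝ) → ℂ),
      FiniteDimensional ℂ Hk ∧ (∀ g ∈ Hk, Continuous g) ∧
      (∀ y : Fin d → ℝ, ∀ g ∈ Hk, (fun x => g (x + y)) ∈ Hk) ∧
      (fd (h k))^[m k] f ∈ Hk) :
    ∃ Z : Submodule ℂ ((Fin d → ℝ) → ℂ),
      FiniteDimensional ℂ Z ∧ (∀ g ∈ Z, Continuous g) ∧
      (∀ y : Fin d → ℝ, ∀ g ∈ Z, (fun x => g (x + y)) ∈ Z) ∧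
      f ∈ Z :=
  stmt5_general d t h hdense f hf m hmem
end

section
/- Let h > 0 be a real number and let g : ℝ → ℂ be a continuous function such that g(kh) = 0 for every integer k. Then there exists a continuous function f : ℝ → ℂ such that f(kh) = 0 for every integer k and Δ_h f = g, i.e. f(x+h) − f(x) = g(x) for all x ∈ ℝ. -/
open Finset Filter

noncomputable def signedPartialSum {M : Type*} [AddCommGroup M] (a : ℤ → M) (n : ℤ) : M :=
  ∑ j ∈ Ico 0 n, a j - ∑ j ∈ Ico n 0, a j

theorem signedPartialSum_add_one {M : Type*} [AddCommGroup M] (a : ℤ → M) (n : ℤ) :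
    signedPartialSum a (n + 1) = signedPartialSum a n + a n := by
  rcases le_or_gt 0 n with hn | hn
  · simp [signedPartialSum, Ico_eq_empty_of_le hn, Ico_eq_empty_of_le (by omega : (0 : ℤ) ≤ n + 1),
      ← insert_Ico_right_eq_Ico_add_one hn, add_comm]
  · simp [signedPartialSum, Ico_eq_empty_of_le hn.le, Ico_eq_empty_of_le (by omega : n + 1 ≤ 0),
      ← insert_Ico_add_one_left_eq_Ico hn]

theorem continuous_signedPartialSum {X M : Type*} [TopologicalSpace X] [AddCommGroup M]
    [TopologicalSpace M] [IsTopologicalAddGroup M] {φ : ℤ → X → M}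
    (hφ : ∀ j, Continuous (φ j)) (n : ℤ) :
    Continuous fun x => signedPartialSum (φ · x) n :=
  (continuous_finsetSum _ fun j _ => hφ j).sub (continuous_finsetSum _ fun j _ => hφ j)

theorem continuous_floor_apply {α X : Type*} [Ring α] [LinearOrder α] [IsStrictOrderedRing α]
    [FloorRing α] [Archimedean α] [TopologicalSpace α] [OrderTopology α] [TopologicalSpace X]
    {F : ℤ → α → X} (hF : ∀ n, Continuous (F n)) (hglue : ∀ n : ℤ, F (n - 1) n = F n n) :
    Continuous fun x => F ⌊x⌋ x := by
  have hlf : LocallyFinite fun n : ℤ => Set.Icc (n : α) (n + 1) :=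
    locallyFinite_Icc_of_tendsto tendsto_intCast_atTop_atTop
      (tendsto_atBot_add_const_right _ _ (tendsto_intCast_atBot_iff.2 tendsto_id))
  refine hlf.continuous ?_ (fun _ => isClosed_Icc) fun n => (hF n).continuousOn.congr ?_
  · exact Set.eq_univ_of_forall fun x => Set.mem_iUnion.2
      ⟨⌊x⌋, Int.floor_le x, (Int.lt_floor_add_one x).le⟩
  · rintro x ⟨hnx, hxn⟩
    rcases hxn.lt_or_eq with hlt | rfl
    · simp only [Int.floor_eq_iff.2 ⟨hnx, hlt⟩]
    · simpa using (hglue (n + 1)).symm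

/-- With `n = ⌊x / h⌋`, this is `g (x - h) + ⋯ + g (x - n h)`. -/
noncomputable def indefiniteSum (h : ℝ) (g : ℝ → ℂ) (x : ℝ) : ℂ :=
  signedPartialSum (fun j => g ((Int.fract (x / h) + j) * h)) ⌊x / h⌋

theorem fd_indefiniteSum {h : ℝ} (hh : h ≠ 0) (g : ℝ → ℂ) : fd h (indefiniteSum h g) = g := by
  funext x
  have hx : (x + h) / h = x / h + 1 := by field_simp
  simp only [fd, indefiniteSum, hx, Int.fract_add_one, Int.floor_add_one,
    signedPartialSum_add_one, Int.fract_add_floor, div_mul_cancel₀ x hh, add_sub_cancel_left]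

theorem indefiniteSum_intCast_mul {h : ℝ} (hh : h ≠ 0) {g : ℝ → ℂ}
    (hgz : ∀ k : ℤ, g (k * h) = 0) (k : ℤ) : indefiniteSum h g (k * h) = 0 := by
  simp [indefiniteSum, mul_div_assoc, div_self hh, signedPartialSum, hgz]

theorem continuous_indefiniteSum (h : ℝ) {g : ℝ → ℂ} (hg : Continuous g)
    (hgz : ∀ k : ℤ, g (k * h) = 0) : Continuous (indefiniteSum h g) := by
  let F : ℤ → ℝ → ℂ := fun n y => signedPartialSum (fun j => g ((y - n + j) * h)) n
  have hF : ∀ n, Continuous (F n) := fun n =>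
    continuous_signedPartialSum (fun j => hg.comp (by fun_prop)) n
  have hglue : ∀ n : ℤ, F (n - 1) n = F n n := by
    intro n
    have hgz' : ∀ j : ℤ, g ((1 + j) * h) = 0 := fun j => by exact_mod_cast hgz (1 + j)
    simp [F, signedPartialSum, hgz', hgz]
  exact (continuous_floor_apply hF hglue).comp (continuous_id.div_const h)

theorem stmt7 (h : ℝ) (hh : 0 < h) (g : ℝ → ℂ) (hg : Continuous g)
    (hgz : ∀ k : ℤ, g (k * h) = 0) :
    ∃ f : ℝ → ℂ, Continuous f ∧ (∀ k : ℤ, f (k * h) = 0) ∧ fd h f = g :=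
  ⟨indefiniteSum h g, continuous_indefiniteSum h hg hgz, indefiniteSum_intCast_mul hh.ne' hgz,
    fd_indefiniteSum hh.ne' g⟩
end

section
/- Let h_1, h_2 > 0 be real numbers with h_1/h_2 ∈ ℚ and let m ≥ 1 be a natural number. Then there exists a continuous function f : ℝ → ℂ such that Δ_{h_1}^m f = 0 and Δ_{h_2}^m f = 0, but f is not a continuous exponential polynomial on ℝ (equivalently, f does not belong to any finite-dimensional translation-invariant subspace of C(ℝ, ℂ)). -/
/-- `f : ℝ → ℂ` is a continuous exponential polynomial on `ℝ`:
`f x = ∑ j, p j (x) * exp (λ_j * x)` with complex polynomials `p j` and `λ_j ∈ ℂ`. -/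
def IsExpPoly1 (f : ℝ → ℂ) : Prop :=
  ∃ (n : ℕ) (p : Fin n → Polynomial ℂ) (lam : Fin n → ℂ),
    ∀ x : ℝ, f x = ∑ j, (p j).eval (x : ℂ) * Complex.exp (lam j * (x : ℂ))

/-!
Write `h₁ = a d` and `h₂ = b d` with `a, b ∈ ℤ`, which is possible since `h₁ / h₂` is rational.
Every `d`-periodic function is killed by `Δ_{h₁}` and `Δ_{h₂}`, hence by their `m`-th powers.
The continuous `d`-periodic function `x ↦ |sin (π x / d)|` has a corner at `0`, whereas
exponential polynomials are differentiable.
-/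

open Real Function

section FiniteDifference

variable {α : Type*} [Add α] {f : α → ℂ} {h : α}

lemma fd_eq_zero_of_periodic (hf : Periodic f h) : fd h f = 0 := by
  funext x
  simp [fd, hf x]

lemma fd_iterate_eq_zero_of_periodic (hf : Periodic f h) {m : ℕ} (hm : m ≠ 0) :
    (fd h)^[m] f = 0 := by
  obtain ⟨k, rfl⟩ := Nat.exists_eq_succ_of_ne_zero hm
  rw [iterate_succ_apply, fd_eq_zero_of_periodic hf, iterate_fixed (fd_eq_zero_of_periodic fun _ => rfl)]

end FiniteDifference

lemma IsExpPoly1.differentiable {f : ℝ → ℂ} (hf : IsExpPoly1 f) : Differentiable ℝ f := by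
  obtain ⟨n, p, lam, hf⟩ := hf
  rw [funext hf]
  have hp (j : Fin n) : Differentiable ℝ fun z : ℂ => (p j).eval z :=
    (p j).differentiable.restrictScalars (𝕜' := ℂ) ℝ
  have hexp : Differentiable ℝ Complex.exp :=
    Complex.differentiable_exp.restrictScalars (𝕜' := ℂ) ℝ
  fun_prop

lemma not_differentiableAt_abs_of_hasDerivAt {s : ℝ → ℝ} {c x : ℝ} (hs : HasDerivAt s c x)
    (hc : c ≠ 0) (hsx : s x = 0) : ¬ DifferentiableAt ℝ (fun y => |s y|) x := by
  intro hdiff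
  -- Both `|s|` and `|s| - s` are nonnegative and vanish at `x`, so both have a critical point there.
  have hmin : IsLocalMin (fun y => |s y|) x :=
    Filter.Eventually.of_forall fun y => by simp [hsx]
  have hmin' : IsLocalMin (fun y => |s y| - s y) x :=
    Filter.Eventually.of_forall fun y => by simp [hsx, le_abs_self]
  have hzero := hmin.hasDerivAt_eq_zero hdiff.hasDerivAt
  have hzero' := hmin'.hasDerivAt_eq_zero (hdiff.hasDerivAt.sub hs)
  exact hc (by linarith)

lemma not_differentiableAt_abs_sin_zero {d : ℝ} (hd : d ≠ 0) :
    ¬ DifferentiableAt ℝ (fun x => |sin (π * x / d)|) 0 := by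
  have hlin : HasDerivAt (fun x : ℝ => π * x / d) (π / d) 0 := by
    simpa using ((hasDerivAt_id (0 : ℝ)).const_mul π).div_const d
  have hs := (hasDerivAt_sin _).comp 0 hlin
  simp only [mul_zero, zero_div, cos_zero, one_mul] at hs
  exact not_differentiableAt_abs_of_hasDerivAt hs (div_ne_zero pi_ne_zero hd) (by simp)

lemma periodic_abs_sin {d : ℝ} (hd : d ≠ 0) : Periodic (fun x => |sin (π * x / d)|) d := by
  intro x
  have : π * (x + d) / d = π * x / d + π := by field_simp
  simp only [this, sin_add_pi, abs_neg]

lemma exists_int_mul_eq_of_div_eq_rat {h₁ h₂ : ℝ} (hh₂ : h₂ ≠ 0) {q : ℚ} (hq : (q : ℝ) = h₁ / h₂) :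
    ∃ d ≠ 0, ∃ a b : ℤ, h₁ = a * d ∧ h₂ = b * d := by
  have hden : (q.den : ℝ) ≠ 0 := by exact_mod_cast q.den_ne_zero
  refine ⟨h₂ / q.den, div_ne_zero hh₂ hden, q.num, q.den, ?_, by push_cast; field_simp⟩
  rw [eq_div_iff hh₂, Rat.cast_def] at hq
  rw [← hq]
  field_simp

theorem stmt9_general (h₁ h₂ : ℝ) (hh₂ : 0 < h₂)
    (hq : ∃ q : ℚ, (q : ℝ) = h₁ / h₂) (m : ℕ) (hm : 1 ≤ m) :
    ∃ f : ℝ → ℂ, Continuous f ∧ (fd h₁)^[m] f = 0 ∧ (fd h₂)^[m] f = 0 ∧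
      ¬ IsExpPoly1 f := by
  obtain ⟨q, hq⟩ := hq
  obtain ⟨d, hd, a, b, rfl, rfl⟩ := exists_int_mul_eq_of_div_eq_rat hh₂.ne' hq
  have hper : Periodic (fun x => ((|sin (π * x / d)| : ℝ) : ℂ)) d :=
    (periodic_abs_sin hd).comp ((↑) : ℝ → ℂ)
  have hm0 : m ≠ 0 := Nat.one_le_iff_ne_zero.mp hm
  refine ⟨_, by fun_prop, fd_iterate_eq_zero_of_periodic (hper.int_mul a) hm0,
    fd_iterate_eq_zero_of_periodic (hper.int_mul b) hm0, fun hexp => ?_⟩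
  have hre := Complex.reCLM.differentiableAt.comp 0 (hexp.differentiable 0)
  refine not_differentiableAt_abs_sin_zero hd (hre.congr_of_eventuallyEq ?_)
  exact Filter.Eventually.of_forall fun x => by simp

theorem stmt9 (h₁ h₂ : ℝ) (hh₁ : 0 < h₁) (hh₂ : 0 < h₂)
    (hq : ∃ q : ℚ, (q : ℝ) = h₁ / h₂) (m : ℕ) (hm : 1 ≤ m) :
    ∃ f : ℝ → ℂ, Continuous f ∧ (fd h₁)^[m] f = 0 ∧ (fd h₂)^[m] f = 0 ∧
      ¬ IsExpPoly1 f :=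
  stmt9_general h₁ h₂ hh₂ hq m hm
end
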